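/- arXiv:1009.0931 — 7 statements merged into one kernel-verified Lean document; each statement's English description precedes it below -/
import Mathlib

section
/- Let N = 2, let γ > 0, and let Ω ⊆ P_γ ⊂ ℝ² be an open set. Then for every v ∈ C_c^∞(Ω): ∫_Ω |∇v(x)|² dx ≥ ∫_Ω v(x)²/|x|² dx (i.e. the Hardy inequality holds with constant N²/4 = 1). -/
open Real MeasureTheory

/-- The paraboloid `P_γ = {x = (x₁, x₂) ∈ ℝ² : x₂ > γ x₁²}`. -/
def paraboloid2 (γ : ℝ) : Set (EuclideanSpace ℝ (Fin 2)) :=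
  {x | γ * (x 0) ^ 2 < x 1}

noncomputable section HardyAux

abbrev E2' := EuclideanSpace ℝ (Fin 2)
def E₀ : E2' := EuclideanSpace.single 0 1
def E₁ : E2' := EuclideanSpace.single 1 1
def Fone (x : E2') : ℝ := -(x 0) * (x 0 * x 0 + x 1 * x 1)⁻¹
def Ftwo (x : E2') : ℝ := (x 1)⁻¹ - x 1 * (x 0 * x 0 + x 1 * x 1)⁻¹
def Gone (v : E2' → ℝ) (x : E2') : ℝ := if 0 < x 1 then v x * v x * Fone x else 0
def Gtwo (v : E2' → ℝ) (x : E2') : ℝ := if 0 < x 1 then v x * v x * Ftwo x else 0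

lemma norm_sq_eq' (x : E2') : ‖x‖ ^ 2 = (x 0) ^ 2 + (x 1) ^ 2 := by
  rw [EuclideanSpace.norm_eq, Real.sq_sqrt (by positivity)]
  simp [Fin.sum_univ_two, sq_abs]

lemma grad_sq (v : E2' → ℝ) (x : E2') :
    ‖gradient v x‖ ^ 2 = (fderiv ℝ v x E₀) ^ 2 + (fderiv ℝ v x E₁) ^ 2 := by
  have h : ∀ i, gradient v x i = fderiv ℝ v x (EuclideanSpace.single i 1) := by
    intro i
    have := InnerProductSpace.toDual_symm_apply (𝕜 := ℝ) (E := E2')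
      (x := EuclideanSpace.single i (1:ℝ)) (y := fderiv ℝ v x)
    rw [gradient]
    rw [real_inner_comm] at this
    rw [← this, EuclideanSpace.inner_single_left]
    simp
  rw [norm_sq_eq', h 0, h 1]
  rfl

lemma alg (a b c s t : ℝ) (ht : 0 < t) :
    c * c * (-s * (-((s * s + t * t) ^ 2)⁻¹ * (s * 1 + s * 1)) + (s * s + t * t)⁻¹ * -1) +
        -s * (s * s + t * t)⁻¹ * (c * a + c * a) +
      (c * c * (-(t ^ 2)⁻¹ - (t * (-((s * s + t * t) ^ 2)⁻¹ * (t * 1 + t * 1)) + (s * s + t * t)⁻¹)) +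
        (t⁻¹ - t * (s * s + t * t)⁻¹) * (c * b + c * b))
      ≤ a ^ 2 + b ^ 2 - c ^ 2 / (s ^ 2 + t ^ 2) := by
  have hQ : (0:ℝ) < s * s + t * t := by nlinarith
  have hQ' : s * s + t * t ≠ 0 := ne_of_gt hQ
  have ht' : t ≠ 0 := ne_of_gt ht
  have key : a ^ 2 + b ^ 2 - c ^ 2 / (s ^ 2 + t ^ 2) -
      (c * c * (-s * (-((s * s + t * t) ^ 2)⁻¹ * (s * 1 + s * 1)) + (s * s + t * t)⁻¹ * -1) +
        -s * (s * s + t * t)⁻¹ * (c * a + c * a) +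
      (c * c * (-(t ^ 2)⁻¹ - (t * (-((s * s + t * t) ^ 2)⁻¹ * (t * 1 + t * 1)) + (s * s + t * t)⁻¹)) +
        (t⁻¹ - t * (s * s + t * t)⁻¹) * (c * b + c * b)))
      = (a + c * s / (s * s + t * t)) ^ 2 + (b - c * (t⁻¹ - t * (s * s + t * t)⁻¹)) ^ 2 := by
    field_simp
    ring
  nlinarith [key, sq_nonneg (a + c * s / (s * s + t * t)),
    sq_nonneg (b - c * (t⁻¹ - t * (s * s + t * t)⁻¹))]

lemma pointwise_key (v : E2' → ℝ) (hv : ContDiff ℝ (⊤ : ℕ∞) v) (x : E2') (hx : 0 < x 1) :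
    fderiv ℝ (fun y => v y * v y * Fone y) x E₀ + fderiv ℝ (fun y => v y * v y * Ftwo y) x E₁
      ≤ ‖gradient v x‖ ^ 2 - v x ^ 2 / ‖x‖ ^ 2 := by
  have hQ : 0 < x 0 * x 0 + x 1 * x 1 := by nlinarith
  have hq0 : x 0 * x 0 + x 1 * x 1 ≠ 0 := ne_of_gt hQ
  have ht0 : x 1 ≠ 0 := ne_of_gt hx
  have h0 : HasFDerivAt (fun y : E2' => y 0) (EuclideanSpace.proj (0 : Fin 2) : E2' →L[ℝ] ℝ) x :=
    (EuclideanSpace.proj (0 : Fin 2) : E2' →L[ℝ] ℝ).hasFDerivAt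
  have h1 : HasFDerivAt (fun y : E2' => y 1) (EuclideanSpace.proj (1 : Fin 2) : E2' →L[ℝ] ℝ) x :=
    (EuclideanSpace.proj (1 : Fin 2) : E2' →L[ℝ] ℝ).hasFDerivAt
  have hq := (h0.mul h0).add (h1.mul h1)
  have hinvq := (hasDerivAt_inv hq0).comp_hasFDerivAt x hq
  have hF1 : HasFDerivAt Fone _ x := (h0.neg).mul hinvq
  have hinvt := (hasDerivAt_inv ht0).comp_hasFDerivAt x h1
  have hF2 : HasFDerivAt Ftwo _ x := hinvt.sub (h1.mul hinvq)
  have hdv : HasFDerivAt v (fderiv ℝ v x) x := (hv.differentiable (by simp) x).hasFDerivAt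
  have hv2 := hdv.mul hdv
  have hG1 := hv2.mul hF1
  have hG2 := hv2.mul hF2
  have e00 : (EuclideanSpace.proj (0 : Fin 2) : E2' →L[ℝ] ℝ) E₀ = 1 := by simp [E₀]
  have e01 : (EuclideanSpace.proj (0 : Fin 2) : E2' →L[ℝ] ℝ) E₁ = 0 := by simp [E₁]
  have e10 : (EuclideanSpace.proj (1 : Fin 2) : E2' →L[ℝ] ℝ) E₀ = 0 := by simp [E₀]
  have e11 : (EuclideanSpace.proj (1 : Fin 2) : E2' →L[ℝ] ℝ) E₁ = 1 := by simp [E₁]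
  have key1 : fderiv ℝ (fun y => v y * v y * Fone y) x E₀
      = v x * v x * (-(x 0) * (-((x 0 * x 0 + x 1 * x 1) ^ 2)⁻¹ * (x 0 * 1 + x 0 * 1)) +
            (x 0 * x 0 + x 1 * x 1)⁻¹ * -1) +
          -(x 0) * (x 0 * x 0 + x 1 * x 1)⁻¹ *
            (v x * fderiv ℝ v x E₀ + v x * fderiv ℝ v x E₀) := by
    rw [HasFDerivAt.fderiv (f := fun y => v y * v y * Fone y) hG1]
    simp [e00, e10, Fone]
    ring
  have key2 : fderiv ℝ (fun y => v y * v y * Ftwo y) x E₁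
      = v x * v x * (-((x 1) ^ 2)⁻¹ -
            ((x 1) * (-((x 0 * x 0 + x 1 * x 1) ^ 2)⁻¹ * (x 1 * 1 + x 1 * 1)) +
              (x 0 * x 0 + x 1 * x 1)⁻¹)) +
          ((x 1)⁻¹ - x 1 * (x 0 * x 0 + x 1 * x 1)⁻¹) *
            (v x * fderiv ℝ v x E₁ + v x * fderiv ℝ v x E₁) := by
    rw [HasFDerivAt.fderiv (f := fun y => v y * v y * Ftwo y) hG2]
    simp [e01, e11, Ftwo]
    ring
  rw [key1, key2, grad_sq, norm_sq_eq']
  exact alg (fderiv ℝ v x E₀) (fderiv ℝ v x E₁) (v x) (x 0) (x 1) hx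

lemma isOpen_H : IsOpen {x : E2' | 0 < x 1} :=
  isOpen_lt continuous_const (EuclideanSpace.proj (1 : Fin 2)).continuous

lemma contDiffOn_Fone : ContDiffOn ℝ (⊤ : ℕ∞) Fone {x : E2' | 0 < x 1} := by
  intro x hx
  have hx' : (0:ℝ) < x 1 := hx
  have hq0 : x 0 * x 0 + x 1 * x 1 ≠ 0 := by nlinarith
  have c0 : ContDiff ℝ (⊤ : ℕ∞) (fun y : E2' => y 0) := (EuclideanSpace.proj (0 : Fin 2) : E2' →L[ℝ] ℝ).contDiff
  have c1 : ContDiff ℝ (⊤ : ℕ∞) (fun y : E2' => y 1) := (EuclideanSpace.proj (1 : Fin 2) : E2' →L[ℝ] ℝ).contDiff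
  have : ContDiffAt ℝ (⊤ : ℕ∞) Fone x := by
    apply ContDiffAt.mul (c0.neg.contDiffAt)
    exact (((c0.mul c0).add (c1.mul c1)).contDiffAt).inv hq0
  exact this.contDiffWithinAt

lemma contDiffOn_Ftwo : ContDiffOn ℝ (⊤ : ℕ∞) Ftwo {x : E2' | 0 < x 1} := by
  intro x hx
  have hx' : (0:ℝ) < x 1 := hx
  have hq0 : x 0 * x 0 + x 1 * x 1 ≠ 0 := by nlinarith
  have ht0 : x 1 ≠ 0 := ne_of_gt hx'
  have c0 : ContDiff ℝ (⊤ : ℕ∞) (fun y : E2' => y 0) := (EuclideanSpace.proj (0 : Fin 2) : E2' →L[ℝ] ℝ).contDiff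
  have c1 : ContDiff ℝ (⊤ : ℕ∞) (fun y : E2' => y 1) := (EuclideanSpace.proj (1 : Fin 2) : E2' →L[ℝ] ℝ).contDiff
  have : ContDiffAt ℝ (⊤ : ℕ∞) Ftwo x := by
    apply ContDiffAt.sub (c1.contDiffAt.inv ht0)
    exact ContDiffAt.mul c1.contDiffAt ((((c0.mul c0).add (c1.mul c1)).contDiffAt).inv hq0)
  exact this.contDiffWithinAt

variable {v : E2' → ℝ}

lemma G_eventually_eq_of_pos (x : E2') (hx : 0 < x 1) :
    (Gone v) =ᶠ[nhds x] (fun y => v y * v y * Fone y) := by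
  filter_upwards [isOpen_H.mem_nhds hx] with y hy
  exact if_pos hy

lemma G2_eventually_eq_of_pos (x : E2') (hx : 0 < x 1) :
    (Gtwo v) =ᶠ[nhds x] (fun y => v y * v y * Ftwo y) := by
  filter_upwards [isOpen_H.mem_nhds hx] with y hy
  exact if_pos hy

lemma G_eventually_zero (x : E2') (hx : x ∉ tsupport v) :
    (Gone v) =ᶠ[nhds x] 0 ∧ (Gtwo v) =ᶠ[nhds x] 0 := by
  rw [notMem_tsupport_iff_eventuallyEq] at hx
  constructor <;>
  · filter_upwards [hx] with y hy
    simp [Gone, Gtwo, hy]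

lemma contDiff_Gone (hv : ContDiff ℝ (⊤ : ℕ∞) v) (hsupp : tsupport v ⊆ {x : E2' | 0 < x 1}) :
    ContDiff ℝ (⊤ : ℕ∞) (Gone v) := by
  rw [contDiff_iff_contDiffAt]
  intro x
  by_cases hx : 0 < x 1
  · exact (((hv.contDiffAt.mul hv.contDiffAt).mul
      ((contDiffOn_Fone.contDiffAt (isOpen_H.mem_nhds hx))))).congr_of_eventuallyEq
      (G_eventually_eq_of_pos x hx)
  · have hxs : x ∉ tsupport v := fun h => hx (hsupp h)
    exact contDiffAt_const.congr_of_eventuallyEq (G_eventually_zero x hxs).1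

lemma contDiff_Gtwo (hv : ContDiff ℝ (⊤ : ℕ∞) v) (hsupp : tsupport v ⊆ {x : E2' | 0 < x 1}) :
    ContDiff ℝ (⊤ : ℕ∞) (Gtwo v) := by
  rw [contDiff_iff_contDiffAt]
  intro x
  by_cases hx : 0 < x 1
  · exact (((hv.contDiffAt.mul hv.contDiffAt).mul
      ((contDiffOn_Ftwo.contDiffAt (isOpen_H.mem_nhds hx))))).congr_of_eventuallyEq
      (G2_eventually_eq_of_pos x hx)
  · have hxs : x ∉ tsupport v := fun h => hx (hsupp h)
    exact contDiffAt_const.congr_of_eventuallyEq (G_eventually_zero x hxs).2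

def Φ : (ℝ × ℝ) ≃L[ℝ] E2' :=
  ((EuclideanSpace.equiv (Fin 2) ℝ).trans (ContinuousLinearEquiv.finTwoArrow ℝ ℝ)).symm

def eM : E2' ≃ᵐ (ℝ × ℝ) :=
  (MeasurableEquiv.toLp 2 (Fin 2 → ℝ)).symm.trans MeasurableEquiv.finTwoArrow

lemma eM_symm_eq : ⇑eM.symm = ⇑Φ := rfl

lemma Φ_e0 : Φ ((1:ℝ), (0:ℝ)) = E₀ := by
  ext i
  fin_cases i <;> rfl

lemma Φ_e1 : Φ ((0:ℝ), (1:ℝ)) = E₁ := by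
  ext i
  fin_cases i <;> rfl

lemma measurePreserving_eM : MeasurePreserving eM :=
  (volume_preserving_finTwoArrow ℝ).comp
    (EuclideanSpace.volume_preserving_symm_measurableEquiv_toLp (Fin 2))

theorem integral_div_eq_zero (G1 G2 : E2' → ℝ) (hG1 : ContDiff ℝ (⊤ : ℕ∞) G1) (hG2 : ContDiff ℝ (⊤ : ℕ∞) G2)
    (K : Set E2') (hK : IsCompact K)
    (hz1 : ∀ x ∉ K, G1 x = 0) (hz2 : ∀ x ∉ K, G2 x = 0) :
    ∫ x : E2', (fderiv ℝ G1 x E₀ + fderiv ℝ G2 x E₁) = 0 := by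
  set g1 : ℝ × ℝ → ℝ := fun p => G1 (Φ p) with hg1def
  set g2 : ℝ × ℝ → ℝ := fun p => G2 (Φ p) with hg2def
  have hg1 : ContDiff ℝ (⊤ : ℕ∞) g1 := hG1.comp (Φ : (ℝ × ℝ) ≃L[ℝ] E2').contDiff
  have hg2 : ContDiff ℝ (⊤ : ℕ∞) g2 := hG2.comp (Φ : (ℝ × ℝ) ≃L[ℝ] E2').contDiff
  have hchain1 : ∀ p : ℝ × ℝ, fderiv ℝ g1 p (1, 0) = fderiv ℝ G1 (Φ p) E₀ := by
    intro p
    have h := ((hG1.differentiable (by simp) (Φ p)).hasFDerivAt).comp p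
      ((Φ : (ℝ × ℝ) →L[ℝ] E2').hasFDerivAt)
    have h2 : fderiv ℝ g1 p = (fderiv ℝ G1 (Φ p)).comp (Φ : (ℝ × ℝ) →L[ℝ] E2') := h.fderiv
    rw [h2]
    simp [Φ_e0]
  have hchain2 : ∀ p : ℝ × ℝ, fderiv ℝ g2 p (0, 1) = fderiv ℝ G2 (Φ p) E₁ := by
    intro p
    have h := ((hG2.differentiable (by simp) (Φ p)).hasFDerivAt).comp p
      ((Φ : (ℝ × ℝ) →L[ℝ] E2').hasFDerivAt)
    have h2 : fderiv ℝ g2 p = (fderiv ℝ G2 (Φ p)).comp (Φ : (ℝ × ℝ) →L[ℝ] E2') := h.fderiv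
    rw [h2]
    simp [Φ_e1]
  have hK' : IsCompact ((⇑Φ) ⁻¹' K) := by
    have h : (⇑Φ) ⁻¹' K = Φ.symm '' K := by
      ext p
      simp [ContinuousLinearEquiv.image_symm_eq_preimage]
    rw [h]
    exact hK.image (Φ.symm : E2' ≃L[ℝ] (ℝ × ℝ)).continuous
  obtain ⟨r, hr⟩ := hK'.isBounded.subset_ball 0
  set R : ℝ := max r 1 with hRdef
  have hR0 : (0:ℝ) < R := lt_of_lt_of_le one_pos (le_max_right _ _)
  have hball : (⇑Φ) ⁻¹' K ⊆ Metric.ball 0 R :=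
    hr.trans (Metric.ball_subset_ball (le_max_left _ _))
  have hout : ∀ p : ℝ × ℝ, R ≤ ‖p‖ → g1 p = 0 ∧ g2 p = 0 := by
    intro p hp
    have hpK : Φ p ∉ K := by
      intro h
      have h2 : p ∈ Metric.ball (0 : ℝ × ℝ) R := hball h
      rw [mem_ball_zero_iff] at h2
      linarith
    exact ⟨hz1 _ hpK, hz2 _ hpK⟩
  have hnorm_fst : ∀ (x y : ℝ), |y| ≤ ‖(x, y)‖ := by
    intro x y
    rw [Prod.norm_def]
    simpa using le_max_right ‖x‖ |y|
  have hnorm_snd : ∀ (x y : ℝ), |x| ≤ ‖(x, y)‖ := by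
    intro x y
    rw [Prod.norm_def]
    simpa using le_max_left |x| ‖y‖
  have hle : ((-R, -R) : ℝ × ℝ) ≤ (R, R) := ⟨by simp; linarith, by simp; linarith⟩
  have Hi : IntegrableOn (fun p => fderiv ℝ g1 p (1, 0) + fderiv ℝ g2 p (0, 1))
      (Set.Icc ((-R, -R) : ℝ × ℝ) (R, R)) := by
    apply ContinuousOn.integrableOn_compact isCompact_Icc
    apply Continuous.continuousOn
    exact ((hg1.continuous_fderiv (by simp)).clm_apply continuous_const).add
      ((hg2.continuous_fderiv (by simp)).clm_apply continuous_const)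
  have hdiv := integral_divergence_prod_Icc_of_hasFDerivAt_off_countable_of_le
    g1 g2 (fun p => fderiv ℝ g1 p) (fun p => fderiv ℝ g2 p) (-R, -R) (R, R) hle ∅
    Set.countable_empty hg1.continuous.continuousOn hg2.continuous.continuousOn
    (fun x _ => (hg1.differentiable (by simp) x).hasFDerivAt)
    (fun x _ => (hg2.differentiable (by simp) x).hasFDerivAt) Hi
  have hb1 : ∀ x : ℝ, g2 (x, R) = 0 := fun x =>
    (hout _ (le_trans (le_of_eq (abs_of_pos hR0).symm) (hnorm_fst x R))).2
  have hb2 : ∀ x : ℝ, g2 (x, -R) = 0 := fun x =>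
    (hout _ (by simpa [abs_of_pos hR0] using hnorm_fst x (-R))).2
  have hb3 : ∀ y : ℝ, g1 (R, y) = 0 := fun y =>
    (hout _ (le_trans (le_of_eq (abs_of_pos hR0).symm) (hnorm_snd R y))).1
  have hb4 : ∀ y : ℝ, g1 (-R, y) = 0 := fun y =>
    (hout _ (by simpa [abs_of_pos hR0] using hnorm_snd (-R) y)).1
  simp only [hb1, hb2, hb3, hb4, intervalIntegral.integral_zero, sub_zero, add_zero, zero_sub,
    neg_zero, zero_add] at hdiv
  have hfull : (∫ p : ℝ × ℝ, (fderiv ℝ g1 p (1, 0) + fderiv ℝ g2 p (0, 1))) = 0 := by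
    rw [← setIntegral_eq_integral_of_forall_compl_eq_zero (s := Set.Icc ((-R, -R) : ℝ × ℝ) (R, R))]
    · exact hdiv
    · intro p hp
      have hpR : R < ‖p‖ := by
        by_contra hcon
        push_neg at hcon
        apply hp
        have h1 : |p.1| ≤ R := le_trans (hnorm_snd p.1 p.2) hcon
        have h2 : |p.2| ≤ R := le_trans (hnorm_fst p.1 p.2) hcon
        rw [abs_le] at h1 h2
        exact Set.mem_Icc.mpr ⟨⟨h1.1, h2.1⟩, ⟨h1.2, h2.2⟩⟩
      have hev1 : g1 =ᶠ[nhds p] 0 := by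
        filter_upwards [(isOpen_lt continuous_const continuous_norm).mem_nhds hpR] with q hq
        exact (hout q (le_of_lt hq)).1
      have hev2 : g2 =ᶠ[nhds p] 0 := by
        filter_upwards [(isOpen_lt continuous_const continuous_norm).mem_nhds hpR] with q hq
        exact (hout q (le_of_lt hq)).2
      rw [hev1.fderiv_eq, hev2.fderiv_eq]
      have hz : fderiv ℝ (0 : ℝ × ℝ → ℝ) p = 0 := by
        have h : (0 : ℝ × ℝ → ℝ) = fun _ => (0:ℝ) := rfl
        rw [h, fderiv_fun_const]
        rfl
      rw [hz]
      simp
  have htrans := (measurePreserving_eM.symm eM).integral_comp'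
    (f := eM.symm) (g := fun x => fderiv ℝ G1 x E₀ + fderiv ℝ G2 x E₁)
  rw [← htrans, ← hfull]
  congr 1
  funext p
  rw [hchain1 p, hchain2 p, eM_symm_eq]

lemma fderiv_zero_at (f : E2' → ℝ) (x : E2') (hx : f =ᶠ[nhds x] 0) : fderiv ℝ f x = 0 := by
  rw [hx.fderiv_eq]
  have h : (0 : E2' → ℝ) = fun _ => (0:ℝ) := rfl
  rw [h, fderiv_fun_const]
  rfl

lemma gradient_zero_at (x : E2') (hx : x ∉ tsupport v) : gradient v x = 0 := by
  rw [gradient, fderiv_zero_at v x (notMem_tsupport_iff_eventuallyEq.mp hx)]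
  simp

lemma div_le (hv : ContDiff ℝ (⊤ : ℕ∞) v) (hsupp : tsupport v ⊆ {x : E2' | 0 < x 1}) (x : E2') :
    fderiv ℝ (Gone v) x E₀ + fderiv ℝ (Gtwo v) x E₁
      ≤ ‖gradient v x‖ ^ 2 - v x ^ 2 / ‖x‖ ^ 2 := by
  by_cases hx : 0 < x 1
  · rw [(G_eventually_eq_of_pos x hx).fderiv_eq, (G2_eventually_eq_of_pos x hx).fderiv_eq]
    exact pointwise_key v hv x hx
  · have hxs : x ∉ tsupport v := fun h => hx (hsupp h)
    obtain ⟨h1, h2⟩ := G_eventually_zero (v := v) x hxs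
    rw [fderiv_zero_at _ x h1, fderiv_zero_at _ x h2]
    have hvx : v x = 0 := image_eq_zero_of_notMem_tsupport hxs
    rw [gradient_zero_at x hxs, hvx]
    simp

end HardyAux

theorem stmt1 (γ : ℝ) (hγ : 0 < γ)
    (Ω : Set (EuclideanSpace ℝ (Fin 2))) (hΩo : IsOpen Ω)
    (hΩP : Ω ⊆ paraboloid2 γ) :
    ∀ v : EuclideanSpace ℝ (Fin 2) → ℝ,
      ContDiff ℝ (⊤ : ℕ∞) v → HasCompactSupport v → tsupport v ⊆ Ω →
      (∫ x in Ω, ‖gradient v x‖ ^ 2) ≥ ∫ x in Ω, (v x) ^ 2 / ‖x‖ ^ 2 := by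
  intro v hv hvc hvs
  have hΩH : Ω ⊆ {x : E2' | 0 < x 1} := by
    intro x hx
    have h := hΩP hx
    have h0 : (0:ℝ) ≤ γ * (x 0) ^ 2 := by positivity
    exact lt_of_le_of_lt h0 h
  have hsupp : tsupport v ⊆ {x : E2' | 0 < x 1} := hvs.trans hΩH
  -- the three integrands
  set g : E2' → ℝ := fun x => ‖gradient v x‖ ^ 2 with hgdef
  set h2 : E2' → ℝ := fun x => v x ^ 2 / ‖x‖ ^ 2 with hh2def
  set d : E2' → ℝ := fun x => fderiv ℝ (Gone v) x E₀ + fderiv ℝ (Gtwo v) x E₁ with hddef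
  have hgrad_cont : Continuous (fun x => gradient v x) := by
    have h := hv.continuous_fderiv (by simp)
    exact (InnerProductSpace.toDual ℝ E2').symm.continuous.comp h
  have hg_cont : Continuous g := (hgrad_cont.norm).pow 2
  have hg_supp : HasCompactSupport g := by
    apply hvc.mono'
    intro x hx
    by_contra hxs
    apply hx
    simp only [hgdef, Function.mem_support, ne_eq, not_not] at *
    rw [gradient_zero_at x hxs]
    simp
  have hg_int : Integrable g := hg_cont.integrable_of_hasCompactSupport hg_supp
  have hh2_cont : Continuous h2 := by
    rw [continuous_iff_continuousAt]
    intro x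
    by_cases hx : 0 < x 1
    · have hxne : ‖x‖ ^ 2 ≠ 0 := by
        rw [norm_sq_eq']
        nlinarith
      exact ContinuousAt.div ((hv.continuous.pow 2).continuousAt)
        ((continuous_norm.pow 2).continuousAt) hxne
    · have hxs : x ∉ tsupport v := fun h => hx (hsupp h)
      have hev : h2 =ᶠ[nhds x] 0 := by
        filter_upwards [notMem_tsupport_iff_eventuallyEq.mp hxs] with y hy
        simp [hh2def, hy]
      exact continuousAt_const.congr hev.symm
  have hh2_supp : HasCompactSupport h2 := by
    apply hvc.mono'
    intro x hx
    by_contra hxs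
    apply hx
    simp only [hh2def, Function.mem_support, ne_eq, not_not] at *
    rw [image_eq_zero_of_notMem_tsupport hxs]
    simp
  have hh2_int : Integrable h2 := hh2_cont.integrable_of_hasCompactSupport hh2_supp
  have hd_cont : Continuous d := by
    exact (((contDiff_Gone hv hsupp).continuous_fderiv (by simp)).clm_apply continuous_const).add
      (((contDiff_Gtwo hv hsupp).continuous_fderiv (by simp)).clm_apply continuous_const)
  have hd_supp : HasCompactSupport d := by
    apply hvc.mono'
    intro x hx
    by_contra hxs
    apply hx
    simp only [hddef, Function.mem_support, ne_eq, not_not] at *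
    obtain ⟨h1, h2'⟩ := G_eventually_zero (v := v) x hxs
    rw [fderiv_zero_at _ x h1, fderiv_zero_at _ x h2']
    simp
  have hd_int : Integrable d := hd_cont.integrable_of_hasCompactSupport hd_supp
  -- divergence integral is zero
  have hdz : ∫ x : E2', d x = 0 := by
    apply integral_div_eq_zero (Gone v) (Gtwo v) (contDiff_Gone hv hsupp)
      (contDiff_Gtwo hv hsupp) (tsupport v) hvc
    · intro x hx
      have hvx : v x = 0 := image_eq_zero_of_notMem_tsupport hx
      simp [Gone, hvx]
    · intro x hx
      have hvx : v x = 0 := image_eq_zero_of_notMem_tsupport hx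
      simp [Gtwo, hvx]
  -- pointwise bound
  have hpt : ∀ x, d x ≤ g x - h2 x := fun x => div_le hv hsupp x
  -- set integrals equal to full integrals
  have hgΩ : ∫ x in Ω, g x = ∫ x, g x := by
    apply setIntegral_eq_integral_of_forall_compl_eq_zero
    intro x hx
    have hxs : x ∉ tsupport v := fun h => hx (hvs h)
    simp only [hgdef]
    rw [gradient_zero_at x hxs]
    simp
  have hh2Ω : ∫ x in Ω, h2 x = ∫ x, h2 x := by
    apply setIntegral_eq_integral_of_forall_compl_eq_zero
    intro x hx
    have hxs : x ∉ tsupport v := fun h => hx (hvs h)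
    simp only [hh2def]
    rw [image_eq_zero_of_notMem_tsupport hxs]
    simp
  have hmono : (0:ℝ) ≤ ∫ x, (g x - h2 x) := by
    rw [← hdz]
    exact integral_mono hd_int (hg_int.sub hh2_int) hpt
  rw [integral_sub hg_int hh2_int] at hmono
  rw [ge_iff_le, hgΩ, hh2Ω]
  linarith
end

section
/- Let L > R > 0 be real numbers. Then for every w ∈ C_c^∞((0,R)): ∫₀^R w'(r)² r dr ≥ (1/4) ∫₀^R (w(r)² / (r² (log(L/r))²)) r dr. -/
open Real MeasureTheory

theorem stmt5 (L R : ℝ) (hR : 0 < R) (hLR : R < L) :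
    ∀ w : ℝ → ℝ,
      ContDiff ℝ (⊤ : ℕ∞) w → HasCompactSupport w → tsupport w ⊆ Set.Ioo 0 R →
      (∫ r in Set.Ioo 0 R, (deriv w r) ^ 2 * r) ≥
        (1 / 4) * ∫ r in Set.Ioo 0 R,
          (w r) ^ 2 / (r ^ 2 * (Real.log (L / r)) ^ 2) * r := by
  intro w hw hcs hsub
  have hL0 : 0 < L := hR.trans hLR
  -- find a, b with support inside Ioo a b ⊆ Ioo 0 R
  obtain ⟨a, b, ha, hab, hbR, hK⟩ :
      ∃ a b : ℝ, 0 < a ∧ a < b ∧ b < R ∧ tsupport w ⊆ Set.Ioo a b := by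
    rcases (tsupport w).eq_empty_or_nonempty with hE | hNE
    · exact ⟨R/4, R/2, by linarith, by linarith, by linarith, by simp [hE]⟩
    · have hKc : IsCompact (tsupport w) := hcs
      have hi := hKc.sInf_mem hNE
      have hs := hKc.sSup_mem hNE
      have his : sInf (tsupport w) ≤ sSup (tsupport w) :=
        le_csSup hKc.bddAbove hi
      have h1 : 0 < sInf (tsupport w) := (hsub hi).1
      have h2 : sSup (tsupport w) < R := (hsub hs).2
      refine ⟨sInf (tsupport w) / 2, (sSup (tsupport w) + R) / 2, by linarith,
        by linarith, by linarith, fun x hx => ?_⟩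
      have := csInf_le hKc.bddBelow hx
      have := le_csSup hKc.bddAbove hx
      exact ⟨by linarith, by linarith⟩
  set f1 : ℝ → ℝ := fun r => (deriv w r) ^ 2 * r with hf1
  set f2 : ℝ → ℝ := fun r => (w r) ^ 2 / (r ^ 2 * (Real.log (L / r)) ^ 2) * r with hf2
  have hdw : ∀ x, HasDerivAt w (deriv w x) x := fun x =>
    ((hw.differentiable (by simp)) x).hasDerivAt
  have hwc : Continuous w := hw.continuous
  have hw'c : Continuous (deriv w) := hw.continuous_deriv (by simp)
  -- supports
  have hf1s : Function.support f1 ⊆ tsupport w := by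
    intro x hx
    have : deriv w x ≠ 0 := by
      intro h; apply hx; simp [hf1, h]
    exact support_deriv_subset this
  have hf2s : Function.support f2 ⊆ tsupport w := by
    intro x hx
    have : w x ≠ 0 := by
      intro h; apply hx; simp [hf2, h]
    exact subset_tsupport w this
  -- reduce set integrals to interval integrals
  have reduce : ∀ f : ℝ → ℝ, Function.support f ⊆ tsupport w →
      ∫ r in Set.Ioo 0 R, f r = ∫ r in a..b, f r := by
    intro f hf
    rw [intervalIntegral.integral_eq_integral_of_support_subset
      ((hf.trans hK).trans Set.Ioo_subset_Ioc_self)]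
    exact setIntegral_eq_integral_of_forall_compl_eq_zero fun x hx => by
      by_contra h
      exact hx (hsub (hf h))
  rw [ge_iff_le, reduce f1 hf1s, reduce f2 hf2s]
  -- basic facts on Icc a b
  have hfacts : ∀ x ∈ Set.Icc a b, 0 < x ∧ 0 < Real.log (L / x) := by
    intro x hx
    have hx0 : 0 < x := lt_of_lt_of_le ha hx.1
    have hxL : x < L := lt_trans (lt_of_le_of_lt hx.2 hbR) hLR
    exact ⟨hx0, Real.log_pos ((one_lt_div hx0).2 hxL)⟩
  set G : ℝ → ℝ := fun r => (w r) ^ 2 * (Real.log (L / r))⁻¹ with hGdef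
  set G' : ℝ → ℝ := fun r => 2 * w r * deriv w r * (Real.log (L / r))⁻¹
      + (w r) ^ 2 * (r⁻¹ / (Real.log (L / r)) ^ 2) with hG'def
  set P : ℝ → ℝ := fun x => (deriv w x + w x * (2 * x * Real.log (L / x))⁻¹) ^ 2 * x
    with hPdef
  have hG : ∀ x ∈ Set.Icc a b, HasDerivAt G (G' x) x := by
    intro x hx
    obtain ⟨hx0, hlog⟩ := hfacts x hx
    have hlogne : Real.log (L / x) ≠ 0 := ne_of_gt hlog
    have hdl : HasDerivAt (fun r => Real.log (L / r)) (-x⁻¹) x := by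
      have h1 : HasDerivAt (fun r : ℝ => Real.log L - Real.log r) (-x⁻¹) x := by
        simpa using (Real.hasDerivAt_log (ne_of_gt hx0)).const_sub (Real.log L)
      apply h1.congr_of_eventuallyEq
      filter_upwards [eventually_gt_nhds hx0] with r hr
      rw [Real.log_div (ne_of_gt hL0) (ne_of_gt hr)]
    have hinv : HasDerivAt (fun r => (Real.log (L / r))⁻¹)
        (x⁻¹ / (Real.log (L / x)) ^ 2) x := by
      have := hdl.inv hlogne
      rw [neg_neg] at this
      exact this
    have hw2 : HasDerivAt (fun r => (w r) ^ 2) (2 * w x * deriv w x) x := by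
      have h2 := (hdw x).pow 2
      norm_num at h2
      exact h2
    exact hw2.mul hinv
  -- continuity on Icc
  have hcont : ∀ f : ℝ → ℝ, ContinuousOn f (Set.Icc a b) →
      IntervalIntegrable f volume a b := fun f hf =>
    hf.intervalIntegrable_of_Icc hab.le
  have hlogcont : ContinuousOn (fun r => Real.log (L / r)) (Set.Icc a b) := by
    apply ContinuousOn.log
    · exact continuousOn_const.div continuousOn_id fun x hx => ne_of_gt (hfacts x hx).1
    · intro x hx
      exact ne_of_gt (div_pos hL0 (hfacts x hx).1)
  have hlogccont : ContinuousOn (fun r => (Real.log (L / r))⁻¹) (Set.Icc a b) :=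
    hlogcont.inv₀ fun x hx => ne_of_gt (hfacts x hx).2
  have hG'cont : ContinuousOn G' (Set.Icc a b) := by
    apply ContinuousOn.add
    · exact ((continuousOn_const.mul hwc.continuousOn).mul
        hw'c.continuousOn).mul hlogccont
    · exact (hwc.continuousOn.pow 2).mul
        ((continuousOn_id.inv₀ fun x hx => ne_of_gt (hfacts x hx).1).div
          (hlogcont.pow 2) fun x hx => pow_ne_zero 2 (ne_of_gt (hfacts x hx).2))
  have hPcont : ContinuousOn P (Set.Icc a b) := by
    apply ContinuousOn.mul _ continuousOn_id
    apply ContinuousOn.pow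
    apply hw'c.continuousOn.add
    apply hwc.continuousOn.mul
    apply ContinuousOn.inv₀
    · exact (continuousOn_const.mul continuousOn_id).mul hlogcont
    · intro x hx
      obtain ⟨h1, h2⟩ := hfacts x hx
      positivity
  have hf2cont : ContinuousOn f2 (Set.Icc a b) := by
    apply ContinuousOn.mul _ continuousOn_id
    apply (hwc.continuousOn.pow 2).div
      ((continuousOn_id.pow 2).mul (hlogcont.pow 2))
    intro x hx
    have h1 := (hfacts x hx).1
    have h2 := (hfacts x hx).2
    simp only [Pi.mul_apply, Pi.pow_apply, id]
    positivity
  -- IBP: ∫ G' = 0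
  have hwa : w a = 0 := image_eq_zero_of_notMem_tsupport fun h =>
    absurd (hK h).1 (lt_irrefl a)
  have hwb : w b = 0 := image_eq_zero_of_notMem_tsupport fun h =>
    absurd (hK h).2 (lt_irrefl b)
  have hGab : G a = 0 ∧ G b = 0 := by
    constructor <;> simp [hGdef, hwa, hwb]
  have hGint : (∫ x in a..b, G' x) = 0 := by
    rw [intervalIntegral.integral_eq_sub_of_hasDerivAt
      (fun x hx => hG x (by rwa [Set.uIcc_of_le hab.le] at hx))
      (hcont G' hG'cont)]
    rw [hGab.1, hGab.2, sub_zero]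
  -- pointwise identity
  have key : ∀ x ∈ Set.uIcc a b,
      f1 x = (fun y => P y - (1/2) * G' y + (1/4) * f2 y) x := by
    intro x hx
    rw [Set.uIcc_of_le hab.le] at hx
    obtain ⟨hx0, hlog⟩ := hfacts x hx
    have hlogne : Real.log (L / x) ≠ 0 := ne_of_gt hlog
    have hxne : x ≠ 0 := ne_of_gt hx0
    simp only [hf1, hf2, hPdef, hG'def]
    field_simp
    ring
  have hint : (∫ x in a..b, f1 x)
      = (∫ x in a..b, P x) - (1/2) * (∫ x in a..b, G' x)
        + (1/4) * (∫ x in a..b, f2 x) := by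
    rw [intervalIntegral.integral_congr key]
    rw [intervalIntegral.integral_add
      ((hcont P hPcont).sub ((hcont G' hG'cont).const_mul (1/2)))
      ((hcont f2 hf2cont).const_mul (1/4))]
    rw [intervalIntegral.integral_sub (hcont P hPcont)
      ((hcont G' hG'cont).const_mul (1/2))]
    rw [intervalIntegral.integral_const_mul, intervalIntegral.integral_const_mul]
  have hPnn : 0 ≤ ∫ x in a..b, P x := by
    apply intervalIntegral.integral_nonneg hab.le
    intro u hu
    exact mul_nonneg (sq_nonneg _) (hfacts u hu).1.le
  rw [hint, hGint]
  linarith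
end

section
/- Let N ≥ 3 be an integer, let γ ∈ (0, π), set a = π/(2γ), and let u ∈ A_γ. Define v : [0, γ) → ℝ by v(θ) = u(θ)/cos(aθ) (well defined since cos(aθ) > 0 for 0 ≤ θ < γ, and u vanishes near γ). Then the following identity holds: ∫₀^γ u'(θ)² (sin θ)^{N−2} dθ = ∫₀^γ v'(θ)² cos²(aθ) (sin θ)^{N−2} dθ + a² ∫₀^γ u(θ)² (sin θ)^{N−2} dθ + (N−2)·a·∫₀^γ v(θ)² sin(aθ) cos(aθ) cos θ (sin θ)^{N−3} dθ. -/
open Real MeasureTheory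

/-- `A_γ`: smooth functions on `[0, γ]` (taken as smooth functions on `ℝ`)
vanishing on a neighborhood of `γ`. -/
def memA (γ : ℝ) (u : ℝ → ℝ) : Prop :=
  ContDiff ℝ (⊤ : ℕ∞) u ∧ ∃ η > (0 : ℝ), ∀ θ : ℝ, γ - η < θ → u θ = 0

theorem stmt12 (N : ℕ) (hN : 3 ≤ N) (γ : ℝ) (hγ : γ ∈ Set.Ioo 0 π)
    (a : ℝ) (ha : a = π / (2 * γ))
    (u : ℝ → ℝ) (hu : memA γ u)
    (v : ℝ → ℝ) (hv : ∀ θ, v θ = u θ / Real.cos (a * θ)) :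
    (∫ θ in Set.Ioo 0 γ, (deriv u θ) ^ 2 * Real.sin θ ^ (N - 2)) =
      (∫ θ in Set.Ioo 0 γ,
        (deriv v θ) ^ 2 * Real.cos (a * θ) ^ 2 * Real.sin θ ^ (N - 2))
      + a ^ 2 * (∫ θ in Set.Ioo 0 γ, (u θ) ^ 2 * Real.sin θ ^ (N - 2))
      + ((N : ℝ) - 2) * a * ∫ θ in Set.Ioo 0 γ,
          (v θ) ^ 2 * Real.sin (a * θ) * Real.cos (a * θ) * Real.cos θ
            * Real.sin θ ^ (N - 3) := by
  obtain ⟨husm, η, hη, hvan⟩ := hu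
  obtain ⟨hγ0, hγπ⟩ := hγ
  have ha0 : 0 < a := by
    rw [ha]; positivity
  have haγ : a * γ = π / 2 := by
    rw [ha]; field_simp
  -- cos (a θ) > 0 on (-γ, γ)
  have hcos : ∀ θ ∈ Set.Ioo (-γ) γ, 0 < Real.cos (a * θ) := by
    intro θ hθ
    apply Real.cos_pos_of_mem_Ioo
    constructor
    · have := mul_lt_mul_of_pos_left hθ.1 ha0
      simpa [haγ, mul_neg] using this
    · have := mul_lt_mul_of_pos_left hθ.2 ha0
      simpa [haγ] using this
  set U : Set ℝ := Set.Ioo (-γ) γ ∪ Set.Ioi (γ - η) with hU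
  have hUopen : IsOpen U := (isOpen_Ioo).union isOpen_Ioi
  have hsub : Set.Icc 0 γ ⊆ U := by
    intro x hx
    rcases lt_or_eq_of_le hx.2 with h | h
    · exact Or.inl ⟨lt_of_lt_of_le (neg_lt_zero.mpr hγ0) hx.1, h⟩
    · exact Or.inr (by simp [h]; linarith)
  -- v is smooth at each point of U
  have hcosC : ContDiff ℝ (⊤ : ℕ∞) (fun θ : ℝ => Real.cos (a * θ)) :=
    Real.contDiff_cos.comp (contDiff_const.mul contDiff_id)
  have hvAt : ∀ x ∈ U, ContDiffAt ℝ (⊤ : ℕ∞) v x := by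
    intro x hx
    rcases hx with hx | hx
    · have hne : Real.cos (a * x) ≠ 0 := (hcos x hx).ne'
      have : ContDiffAt ℝ (⊤ : ℕ∞) (fun θ => u θ / Real.cos (a * θ)) x :=
        (husm.contDiffAt).div (hcosC.contDiffAt) hne
      exact this.congr_of_eventuallyEq (by
        filter_upwards with θ using (hv θ))
    · have : ContDiffAt ℝ (⊤ : ℕ∞) (fun _ : ℝ => (0 : ℝ)) x := contDiffAt_const
      refine this.congr_of_eventuallyEq ?_
      filter_upwards [isOpen_Ioi.mem_nhds hx] with θ hθ
      rw [hv θ, hvan θ hθ, zero_div]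
  have hvOn : ContDiffOn ℝ (⊤ : ℕ∞) v U := fun x hx => (hvAt x hx).contDiffWithinAt
  set w : ℝ → ℝ := deriv v with hw
  have hwc : ContinuousOn w U :=
    hvOn.continuousOn_deriv_of_isOpen hUopen (by simp)
  have hvd : ∀ x ∈ U, HasDerivAt v (w x) x := fun x hx =>
    ((hvAt x hx).differentiableAt (by simp)).hasDerivAt
  have hvc : ContinuousOn v U := hvOn.continuousOn
  -- u = v * cos(a θ) on U
  have huv : ∀ θ ∈ U, u θ = v θ * Real.cos (a * θ) := by
    intro θ hθ
    rcases hθ with hθ | hθ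
    · rw [hv θ, div_mul_cancel₀ _ (hcos θ hθ).ne']
    · rw [hv θ, hvan θ hθ, zero_div, zero_mul]
  -- derivative of u in terms of v
  have hcosd : ∀ x : ℝ, HasDerivAt (fun θ => Real.cos (a * θ))
      (-(a * Real.sin (a * x))) x := by
    intro x
    have h1 : HasDerivAt (fun θ : ℝ => a * θ) a x := by
      simpa using (hasDerivAt_id x).const_mul a
    have := (Real.hasDerivAt_cos (a * x)).comp x h1
    exact this.congr_deriv (by ring)
  have hsind : ∀ x : ℝ, HasDerivAt (fun θ => Real.sin (a * θ))
      (a * Real.cos (a * x)) x := by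
    intro x
    have h1 : HasDerivAt (fun θ : ℝ => a * θ) a x := by
      simpa using (hasDerivAt_id x).const_mul a
    have := (Real.hasDerivAt_sin (a * x)).comp x h1
    exact this.congr_deriv (by ring)
  have hud : ∀ x ∈ U, deriv u x
      = w x * Real.cos (a * x) - a * v x * Real.sin (a * x) := by
    intro x hx
    have heq : u =ᶠ[nhds x] fun θ => v θ * Real.cos (a * θ) := by
      filter_upwards [hUopen.mem_nhds hx] with θ hθ using huv θ hθ
    have hdd : HasDerivAt (fun θ => v θ * Real.cos (a * θ))
        (w x * Real.cos (a * x) - a * v x * Real.sin (a * x)) x := by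
      have := (hvd x hx).mul (hcosd x)
      exact this.congr_deriv (by ring)
    rw [heq.deriv_eq, hdd.deriv]
  -- the auxiliary function F and its derivative g
  set F : ℝ → ℝ := fun θ => a * v θ ^ 2 * Real.sin (a * θ) * Real.cos (a * θ)
    * Real.sin θ ^ (N - 2) with hF
  set g : ℝ → ℝ := fun θ =>
    a * (2 * v θ * w θ) * Real.sin (a * θ) * Real.cos (a * θ) * Real.sin θ ^ (N - 2)
    + a ^ 2 * v θ ^ 2 * (Real.cos (a * θ) ^ 2 - Real.sin (a * θ) ^ 2) * Real.sin θ ^ (N - 2)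
    + ((N : ℝ) - 2) * a * v θ ^ 2 * Real.sin (a * θ) * Real.cos (a * θ) * Real.cos θ
      * Real.sin θ ^ (N - 3) with hg
  have hN2 : (N : ℝ) - 2 = ((N - 2 : ℕ) : ℝ) := by
    have : (2 : ℕ) ≤ N := by omega
    push_cast [Nat.cast_sub this]; ring
  have hN3 : N - 2 - 1 = N - 3 := by omega
  have hFd : ∀ x ∈ U, HasDerivAt F (g x) x := by
    intro x hx
    have h1 : HasDerivAt (fun θ => v θ ^ 2) (2 * v x * w x) x := by
      have := (hvd x hx).pow 2
      exact this.congr_deriv (by ring)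
    have h2 : HasDerivAt (fun θ => Real.sin θ ^ (N - 2))
        (((N : ℝ) - 2) * Real.sin x ^ (N - 3) * Real.cos x) x := by
      have := (Real.hasDerivAt_sin x).pow (N - 2)
      rw [hN3] at this
      exact this.congr_deriv (by rw [hN2])
    have h3 : HasDerivAt (fun θ => a * v θ ^ 2) (a * (2 * v x * w x)) x :=
      h1.const_mul a
    have h4 := ((h3.mul (hsind x)).mul (hcosd x)).mul h2
    exact h4.congr_deriv (by simp only [hg, Pi.mul_apply]; ring)
  -- FTC for F
  have hIccU : Set.uIcc 0 γ ⊆ U := by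
    rw [Set.uIcc_of_le hγ0.le]; exact hsub
  have hgc : ContinuousOn g (Set.uIcc 0 γ) := by
    apply ContinuousOn.mono _ hIccU
    apply ContinuousOn.add
    apply ContinuousOn.add
    · exact ((((continuousOn_const.mul ((continuousOn_const.mul hvc).mul hwc)).mul
        ((Real.continuous_sin.comp (continuous_const.mul continuous_id)).continuousOn)).mul
        ((Real.continuous_cos.comp (continuous_const.mul continuous_id)).continuousOn)).mul
        ((Real.continuous_sin.pow _).continuousOn))
    · exact ((continuousOn_const.mul (hvc.pow 2)).mul
        ((((Real.continuous_cos.comp (continuous_const.mul continuous_id)).pow 2).sub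
        ((Real.continuous_sin.comp (continuous_const.mul continuous_id)).pow 2)).continuousOn)).mul
        ((Real.continuous_sin.pow _).continuousOn)
    · exact (((((continuousOn_const.mul (hvc.pow 2)).mul
        ((Real.continuous_sin.comp (continuous_const.mul continuous_id)).continuousOn)).mul
        ((Real.continuous_cos.comp (continuous_const.mul continuous_id)).continuousOn)).mul
        Real.continuous_cos.continuousOn).mul ((Real.continuous_sin.pow _).continuousOn))
  have hgint : IntervalIntegrable g volume 0 γ :=
    hgc.intervalIntegrable
  have hFTC : ∫ θ in (0 : ℝ)..γ, g θ = F γ - F 0 :=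
    intervalIntegral.integral_eq_sub_of_hasDerivAt
      (fun x hx => hFd x (hIccU hx)) hgint
  have hF0 : F 0 = 0 := by simp [hF]
  have hvγ : v γ = 0 := by
    rw [hv γ, hvan γ (by linarith), zero_div]
  have hFγ : F γ = 0 := by simp [hF, hvγ]
  have hgzero : ∫ θ in (0 : ℝ)..γ, g θ = 0 := by
    rw [hFTC, hF0, hFγ, sub_zero]
  -- continuity of the other integrands
  have hwIcc : ContinuousOn w (Set.uIcc 0 γ) := hwc.mono hIccU
  have hvIcc : ContinuousOn v (Set.uIcc 0 γ) := hvc.mono hIccU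
  have huc : Continuous u := husm.continuous
  have hudc : Continuous (deriv u) := husm.continuous_deriv (by simp)
  have hint1 : IntervalIntegrable
      (fun θ => (deriv v θ) ^ 2 * Real.cos (a * θ) ^ 2 * Real.sin θ ^ (N - 2))
      volume 0 γ := by
    apply ContinuousOn.intervalIntegrable
    exact ((hwIcc.pow 2).mul
      (((Real.continuous_cos.comp (continuous_const.mul continuous_id)).pow 2).continuousOn)).mul
      ((Real.continuous_sin.pow _).continuousOn)
  have hint2 : IntervalIntegrable
      (fun θ => (u θ) ^ 2 * Real.sin θ ^ (N - 2)) volume 0 γ :=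
    (((huc.pow 2).mul (Real.continuous_sin.pow _)).continuousOn).intervalIntegrable
  have hint3 : IntervalIntegrable
      (fun θ => (v θ) ^ 2 * Real.sin (a * θ) * Real.cos (a * θ) * Real.cos θ
        * Real.sin θ ^ (N - 3)) volume 0 γ := by
    apply ContinuousOn.intervalIntegrable
    exact (((((hvIcc.pow 2).mul
      ((Real.continuous_sin.comp (continuous_const.mul continuous_id)).continuousOn)).mul
      ((Real.continuous_cos.comp (continuous_const.mul continuous_id)).continuousOn)).mul
      Real.continuous_cos.continuousOn).mul ((Real.continuous_sin.pow _).continuousOn))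
  have hintu : IntervalIntegrable
      (fun θ => (deriv u θ) ^ 2 * Real.sin θ ^ (N - 2)) volume 0 γ :=
    (((hudc.pow 2).mul (Real.continuous_sin.pow _)).continuousOn).intervalIntegrable
  -- pointwise identity
  have hpt : ∀ x ∈ Set.uIcc 0 γ,
      (deriv v x) ^ 2 * Real.cos (a * x) ^ 2 * Real.sin x ^ (N - 2)
      + a ^ 2 * ((u x) ^ 2 * Real.sin x ^ (N - 2))
      + ((N : ℝ) - 2) * a * ((v x) ^ 2 * Real.sin (a * x) * Real.cos (a * x)
          * Real.cos x * Real.sin x ^ (N - 3))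
      = (deriv u x) ^ 2 * Real.sin x ^ (N - 2) + g x := by
    intro x hx
    have hxU : x ∈ U := hIccU hx
    rw [hud x hxU, huv x hxU]
    simp only [hg, ← hw]
    ring
  -- convert set integrals to interval integrals
  have hconv : ∀ f : ℝ → ℝ, ∫ θ in Set.Ioo 0 γ, f θ = ∫ θ in (0 : ℝ)..γ, f θ := by
    intro f
    rw [intervalIntegral.integral_of_le hγ0.le, ← MeasureTheory.integral_Ioc_eq_integral_Ioo]
  rw [hconv, hconv, hconv, hconv]
  have hsplit :
      (∫ θ in (0:ℝ)..γ, (deriv v θ) ^ 2 * Real.cos (a * θ) ^ 2 * Real.sin θ ^ (N - 2))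
      + a ^ 2 * (∫ θ in (0:ℝ)..γ, (u θ) ^ 2 * Real.sin θ ^ (N - 2))
      + ((N : ℝ) - 2) * a * (∫ θ in (0:ℝ)..γ,
          (v θ) ^ 2 * Real.sin (a * θ) * Real.cos (a * θ) * Real.cos θ
            * Real.sin θ ^ (N - 3))
      = ∫ θ in (0:ℝ)..γ,
          ((deriv v θ) ^ 2 * Real.cos (a * θ) ^ 2 * Real.sin θ ^ (N - 2)
          + a ^ 2 * ((u θ) ^ 2 * Real.sin θ ^ (N - 2))
          + ((N : ℝ) - 2) * a * ((v θ) ^ 2 * Real.sin (a * θ) * Real.cos (a * θ)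
              * Real.cos θ * Real.sin θ ^ (N - 3))) := by
    rw [intervalIntegral.integral_add (hint1.add (hint2.const_mul _)) (hint3.const_mul _),
      intervalIntegral.integral_add hint1 (hint2.const_mul _),
      intervalIntegral.integral_const_mul, intervalIntegral.integral_const_mul]
  rw [hsplit, intervalIntegral.integral_congr hpt,
    intervalIntegral.integral_add hintu hgint, hgzero, add_zero]
end

section
/- Let N ≥ 3 be an integer and let γ > 0. Then for every u ∈ A_γ: ∫₀^γ u'(t)² t^{N−2} dt ≥ (1/γ)·((N−2)/2)² · ∫₀^γ u(t)² t^{N−3} dt. -/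
open Real MeasureTheory

theorem stmt14 (N : ℕ) (hN : 3 ≤ N) (γ : ℝ) (hγ : 0 < γ) :
    ∀ u : ℝ → ℝ, memA γ u →
      (∫ t in Set.Ioo 0 γ, (deriv u t) ^ 2 * t ^ (N - 2)) ≥
        (1 / γ) * (((N : ℝ) - 2) / 2) ^ 2 *
          ∫ t in Set.Ioo 0 γ, (u t) ^ 2 * t ^ (N - 3) := by
  rintro u ⟨hsm, η, hη, hvan⟩
  have hcu : Continuous u := hsm.continuous
  have hcu' : Continuous (deriv u) := hsm.continuous_deriv (by simp)
  have hdu : Differentiable ℝ u := hsm.differentiable (by simp)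
  set c : ℝ := (N : ℝ) - 2 with hc_def
  have hN3 : (3:ℝ) ≤ (N:ℝ) := by exact_mod_cast hN
  have hc : 0 < c := by rw [hc_def]; linarith
  have hn2 : N - 2 = (N - 3) + 1 := by omega
  have hcast : ((N - 2 : ℕ) : ℝ) = c := by
    rw [hc_def, Nat.cast_sub (by omega)]; norm_num
  clear_value c
  -- continuity of integrands
  have hcE : Continuous fun t : ℝ => (deriv u t) ^ 2 * t ^ (N - 2) := by continuity
  have hcI : Continuous fun t : ℝ => (u t) ^ 2 * t ^ (N - 3) := by continuity
  have hcM : Continuous fun t : ℝ => 2 * u t * deriv u t * t ^ (N - 2) := by continuity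
  have intOn : ∀ f : ℝ → ℝ, Continuous f → IntegrableOn f (Set.Ioo 0 γ) := fun f hf =>
    (hf.continuousOn.integrableOn_Icc).mono_set Set.Ioo_subset_Icc_self
  set E := ∫ t in Set.Ioo 0 γ, (deriv u t) ^ 2 * t ^ (N - 2) with hE_def
  set I := ∫ t in Set.Ioo 0 γ, (u t) ^ 2 * t ^ (N - 3) with hI_def
  set M := ∫ t in Set.Ioo 0 γ, 2 * u t * deriv u t * t ^ (N - 2) with hM_def
  -- Integration by parts: M + c * I = 0
  have hIBP : M + c * I = 0 := by
    have hderiv : ∀ t : ℝ, HasDerivAt (fun t => (u t) ^ 2 * t ^ (N - 2))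
        (2 * u t * deriv u t * t ^ (N - 2) + c * ((u t) ^ 2 * t ^ (N - 3))) t := by
      intro t
      have h1 : HasDerivAt (fun t => (u t) ^ 2) (2 * u t * deriv u t) t := by
        have := ((hdu t).hasDerivAt).fun_pow 2
        simpa [pow_one, mul_comm, mul_assoc, mul_left_comm] using this
      have h2 : HasDerivAt (fun t : ℝ => t ^ (N - 2)) (c * t ^ (N - 3)) t := by
        have := hasDerivAt_pow (N - 2) t
        rw [show N - 2 - 1 = N - 3 by omega, hcast] at this
        exact this
      have := h1.fun_mul h2
      refine this.congr_deriv ?_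
      ring
    have hint : IntervalIntegrable (fun t => 2 * u t * deriv u t * t ^ (N - 2)
        + c * ((u t) ^ 2 * t ^ (N - 3))) volume 0 γ := by
      exact (hcM.add (continuous_const.mul hcI)).intervalIntegrable 0 γ
    have heq := intervalIntegral.integral_eq_sub_of_hasDerivAt
      (fun t _ => hderiv t) hint
    have huγ : u γ = 0 := hvan γ (by linarith)
    have hzero : (0:ℝ) ^ (N - 2) = 0 := zero_pow (by omega)
    rw [huγ] at heq
    simp only [hzero, ne_eq, mul_zero, zero_mul, zero_pow] at heq
    rw [intervalIntegral.integral_of_le hγ.le, integral_Ioc_eq_integral_Ioo] at heq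
    rw [integral_add (intOn _ hcM) ((intOn _ hcI).const_mul c)] at heq
    rw [integral_const_mul] at heq
    rw [hM_def, hI_def]
    simpa using heq
  -- pointwise inequality
  have hpt : ∀ t ∈ Set.Ioo (0:ℝ) γ,
      c * (-(2 * u t * deriv u t * t ^ (N - 2))) ≤
        2 * γ * ((deriv u t) ^ 2 * t ^ (N - 2)) + c ^ 2 / 2 * ((u t) ^ 2 * t ^ (N - 3)) := by
    intro t ht
    obtain ⟨ht0, htγ⟩ := ht
    set a := deriv u t
    set b := u t
    have hP : (0:ℝ) ≤ t ^ (N - 3) := pow_nonneg ht0.le _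
    have ht2 : t ^ (N - 2) = t ^ (N - 3) * t := by rw [hn2, pow_succ]
    rw [ht2]
    have h1 : (0:ℝ) ≤ (2 * γ * a + c * b) ^ 2 * (t ^ (N - 3) * t) := by positivity
    have h2 : (0:ℝ) ≤ (γ - t) * (c * b) ^ 2 * t ^ (N - 3) :=
      mul_nonneg (mul_nonneg (by linarith) (sq_nonneg _)) hP
    have hkey : 0 ≤ 2 * γ * (2 * γ * (a ^ 2 * (t ^ (N - 3) * t))
        + c ^ 2 / 2 * (b ^ 2 * t ^ (N - 3)) - c * (-(2 * b * a * (t ^ (N - 3) * t)))) := by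
      have hid : 2 * γ * (2 * γ * (a ^ 2 * (t ^ (N - 3) * t))
          + c ^ 2 / 2 * (b ^ 2 * t ^ (N - 3)) - c * (-(2 * b * a * (t ^ (N - 3) * t))))
          = (2 * γ * a + c * b) ^ 2 * (t ^ (N - 3) * t)
            + (γ - t) * (c * b) ^ 2 * t ^ (N - 3) := by ring
      rw [hid]; linarith
    nlinarith [hkey, hγ]
  -- integrate the pointwise inequality
  have hmono := setIntegral_mono_on
    (intOn _ (continuous_const.mul hcM.neg))
    (intOn _ ((continuous_const.mul hcE).add (continuous_const.mul hcI)))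
    measurableSet_Ioo hpt
  simp only [Pi.mul_apply, Pi.neg_apply, Pi.add_apply] at hmono
  rw [integral_const_mul, integral_neg,
    integral_add (intOn (fun t => 2 * γ * (deriv u t ^ 2 * t ^ (N - 2))) (continuous_const.mul hcE))
      (intOn (fun t => c ^ 2 / 2 * (u t ^ 2 * t ^ (N - 3))) (continuous_const.mul hcI)),
    integral_const_mul, integral_const_mul] at hmono
  -- now hmono : c * -M ≤ 2γ E + c²/2 I, and M = -c I
  have hM : M = -(c * I) := by linarith
  rw [← hE_def, ← hI_def, ← hM_def, hM] at hmono
  -- c * (c * I) ≤ 2γ E + c²/2 I  ⇒  c² I ≤ 4γ E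
  have hmono2 : c ^ 2 * I ≤ 2 * γ * E + c ^ 2 / 2 * I := by linear_combination hmono
  have h4 : c ^ 2 * I ≤ 4 * γ * E := by linarith
  rw [ge_iff_le]
  calc 1 / γ * (c / 2) ^ 2 * I = (c ^ 2 * I) / (4 * γ) := by
        field_simp
        ring
    _ ≤ (4 * γ * E) / (4 * γ) := by gcongr
    _ = E := by field_simp
end

section
/- Let N ≥ 3 be an integer, let γ > 0, and let (uₙ)ₙ be a sequence in A_γ such that there is a constant M with ∫₀^γ uₙ'(t)² t^{N−2} dt ≤ M for all n. Then there exists a subsequence (u_{n_k}) that is Cauchy in the weighted L² norm ‖u‖ = (∫₀^γ u(t)² t^{N−2} dt)^{1/2} (equivalently, (u_{n_k}) converges in L²((0,γ), t^{N−2}dt)). In other words, the embedding of the weighted Dirichlet space into L²((0,γ), t^{N−2}dt) is compact. -/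
open Real MeasureTheory


lemma intB_cont {a b : ℝ} (ha : 0 < a) (hab : a ≤ b) (m : ℕ) :
    ContinuousOn (fun s : ℝ => (s ^ m)⁻¹) (Set.uIcc a b) := by
  apply ContinuousOn.inv₀ (continuous_pow m).continuousOn
  intro s hs
  rw [Set.uIcc_of_le hab] at hs
  exact ne_of_gt (pow_pos (lt_of_lt_of_le ha hs.1) m)

lemma intB_nonneg {a b : ℝ} (ha : 0 < a) (hab : a ≤ b) (m : ℕ) :
    0 ≤ ∫ s in a..b, (s ^ m)⁻¹ :=
  intervalIntegral.integral_nonneg hab fun s hs =>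
    inv_nonneg.2 (pow_nonneg (ha.le.trans hs.1) m)

lemma intB_le {a b : ℝ} (ha : 0 < a) (hab : a ≤ b) (m : ℕ) :
    (∫ s in a..b, (s ^ m)⁻¹) ≤ (b - a) * (a ^ m)⁻¹ := by
  have h1 : (∫ _ in a..b, ((a:ℝ) ^ m)⁻¹) = (b - a) * (a ^ m)⁻¹ := by
    simp [smul_eq_mul]
  rw [← h1]
  apply intervalIntegral.integral_mono_on hab
  · exact (intB_cont ha hab m).intervalIntegrable
  · exact intervalIntegrable_const
  · intro s hs
    have hs1 : 0 < s := lt_of_lt_of_le ha hs.1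
    exact inv_anti₀ (pow_pos ha m) (pow_le_pow_left₀ ha.le hs.1 m)

lemma intB_pos {a b : ℝ} (ha : 0 < a) (hab : a < b) (m : ℕ) :
    0 < ∫ s in a..b, (s ^ m)⁻¹ := by
  have hb : (0:ℝ) < b := ha.trans hab
  have h1 : (∫ _ in a..b, ((b:ℝ) ^ m)⁻¹) = (b - a) * (b ^ m)⁻¹ := by
    simp [smul_eq_mul]
  have h2 : (b - a) * ((b:ℝ) ^ m)⁻¹ ≤ ∫ s in a..b, (s ^ m)⁻¹ := by
    rw [← h1]
    apply intervalIntegral.integral_mono_on hab.le intervalIntegrable_const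
      ((intB_cont ha hab.le m).intervalIntegrable)
    intro s hs
    exact inv_anti₀ (pow_pos (lt_of_lt_of_le ha hs.1) m)
      (pow_le_pow_left₀ (ha.le.trans hs.1) hs.2 m)
  have hba : (0:ℝ) < b - a := by linarith
  have : (0:ℝ) < (b - a) * (b ^ m)⁻¹ := by positivity
  linarith

lemma key_est {γ M : ℝ} (hγ : 0 < γ) (hM : 0 < M) (m : ℕ)
    {u : ℝ → ℝ} (hu : ContDiff ℝ (⊤ : ℕ∞) u)
    (hint : (∫ t in Set.Ioo 0 γ, (deriv u t) ^ 2 * t ^ m) ≤ M)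
    {a b : ℝ} (ha : 0 < a) (hab : a ≤ b) (hb : b ≤ γ) :
    |u b - u a| ≤ Real.sqrt M * Real.sqrt (∫ s in a..b, (s ^ m)⁻¹) := by
  rcases eq_or_lt_of_le hab with rfl | hab'
  · simp [Real.sqrt_nonneg, mul_nonneg, Real.sqrt_nonneg]
  set B := ∫ s in a..b, ((s:ℝ) ^ m)⁻¹ with hB
  have hBpos : 0 < B := intB_pos ha hab' m
  have hderiv_cont : Continuous (deriv u) := hu.continuous_deriv (by simp)
  -- FTC
  have hftc : u b - u a = ∫ s in a..b, deriv u s := by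
    rw [intervalIntegral.integral_deriv_eq_sub
      (fun x _ => (hu.differentiable (by simp)).differentiableAt)
      (hderiv_cont.intervalIntegrable a b)]
  -- pointwise AM-GM with λ
  set l := Real.sqrt B / Real.sqrt M with hl
  have hlpos : 0 < l := div_pos (Real.sqrt_pos.2 hBpos) (Real.sqrt_pos.2 hM)
  have hpt : ∀ s ∈ Set.Icc a b,
      |deriv u s| ≤ (l * ((deriv u s) ^ 2 * s ^ m) + l⁻¹ * (s ^ m)⁻¹) / 2 := by
    intro s hs
    have hspos : 0 < s := lt_of_lt_of_le ha hs.1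
    have hc : (0:ℝ) < s ^ m := pow_pos hspos m
    set x := |deriv u s| with hx
    have hx2 : x ^ 2 = (deriv u s) ^ 2 := sq_abs _
    rw [← hx2]
    have h := sq_nonneg (l * (s ^ m) * x - 1)
    have hlc : 0 < l * s ^ m := mul_pos hlpos hc
    have hinv : l⁻¹ * (s ^ m)⁻¹ = (l * s ^ m)⁻¹ := (mul_inv l (s^m)).symm
    rw [hinv, le_div_iff₀ (by norm_num : (0:ℝ) < 2)]
    have h1 : (l * s ^ m) * (l * s ^ m)⁻¹ = 1 := mul_inv_cancel₀ hlc.ne'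
    nlinarith [sq_nonneg (l * (s ^ m) * x - 1), hlc, h1]
  -- integrate
  have hint_lhs : IntervalIntegrable (fun s => |deriv u s|) volume a b :=
    hderiv_cont.abs.intervalIntegrable a b
  have hcontw : Continuous fun s : ℝ => (deriv u s) ^ 2 * s ^ m := by
    continuity
  have hint_rhs : IntervalIntegrable
      (fun s => (l * ((deriv u s) ^ 2 * s ^ m) + l⁻¹ * (s ^ m)⁻¹) / 2) volume a b := by
    apply IntervalIntegrable.div_const
    apply IntervalIntegrable.add
    · exact (hcontw.intervalIntegrable a b).const_mul l
    · exact ((intB_cont ha hab m).intervalIntegrable).const_mul l⁻¹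
  have step1 : |u b - u a| ≤ ∫ s in a..b, |deriv u s| := by
    rw [hftc]
    exact intervalIntegral.abs_integral_le_integral_abs hab
  have step2 : (∫ s in a..b, |deriv u s|) ≤
      ∫ s in a..b, (l * ((deriv u s) ^ 2 * s ^ m) + l⁻¹ * (s ^ m)⁻¹) / 2 :=
    intervalIntegral.integral_mono_on hab hint_lhs hint_rhs hpt
  -- compute RHS
  have step3 : (∫ s in a..b, (l * ((deriv u s) ^ 2 * s ^ m) + l⁻¹ * (s ^ m)⁻¹) / 2)
      = (l * (∫ s in a..b, (deriv u s) ^ 2 * s ^ m) + l⁻¹ * B) / 2 := by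
    rw [intervalIntegral.integral_div, intervalIntegral.integral_add
      ((hcontw.intervalIntegrable a b).const_mul l)
      (((intB_cont ha hab m).intervalIntegrable).const_mul l⁻¹),
      intervalIntegral.integral_const_mul, intervalIntegral.integral_const_mul]
  -- the Dirichlet integral over [a,b] is ≤ M
  have step4 : (∫ s in a..b, (deriv u s) ^ 2 * s ^ m) ≤ M := by
    rw [intervalIntegral.integral_of_le hab]
    have hioc : (∫ s in Set.Ioc a b, (deriv u s) ^ 2 * s ^ m)
        ≤ ∫ s in Set.Ioc 0 γ, (deriv u s) ^ 2 * s ^ m := by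
      apply setIntegral_mono_set
      · exact (hcontw.integrableOn_Icc (a := 0) (b := γ)).mono_set Set.Ioc_subset_Icc_self
      · filter_upwards [ae_restrict_mem measurableSet_Ioc] with s hs
        have : (0:ℝ) < s := hs.1
        positivity
      · exact HasSubset.Subset.eventuallyLE (Set.Ioc_subset_Ioc ha.le hb)
    calc (∫ s in Set.Ioc a b, (deriv u s) ^ 2 * s ^ m)
        ≤ ∫ s in Set.Ioc 0 γ, (deriv u s) ^ 2 * s ^ m := hioc
      _ = ∫ s in Set.Ioo 0 γ, (deriv u s) ^ 2 * s ^ m := integral_Ioc_eq_integral_Ioo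
      _ ≤ M := hint
  -- combine
  have hBint : (∫ s in a..b, ((s:ℝ) ^ m)⁻¹) = B := rfl
  have hfinal : (l * M + l⁻¹ * B) / 2 = Real.sqrt M * Real.sqrt B := by
    have hsM : Real.sqrt M ^ 2 = M := Real.sq_sqrt hM.le
    have hsB : Real.sqrt B ^ 2 = B := Real.sq_sqrt hBpos.le
    have hsMp : 0 < Real.sqrt M := Real.sqrt_pos.2 hM
    have hsBp : 0 < Real.sqrt B := Real.sqrt_pos.2 hBpos
    have hM' : M = Real.sqrt M * Real.sqrt M := (Real.mul_self_sqrt hM.le).symm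
    have hB' : B = Real.sqrt B * Real.sqrt B := (Real.mul_self_sqrt hBpos.le).symm
    have e1 : Real.sqrt B / Real.sqrt M * M = Real.sqrt B * Real.sqrt M := by
      rw [div_mul_eq_mul_div, div_eq_iff hsMp.ne']
      linear_combination Real.sqrt B * hM'
    have e2 : (Real.sqrt B / Real.sqrt M)⁻¹ * B = Real.sqrt M * Real.sqrt B := by
      rw [inv_div, div_mul_eq_mul_div, div_eq_iff hsBp.ne']
      linear_combination Real.sqrt M * hB'
    rw [hl, e1, e2]; ring
  have : (l * (∫ s in a..b, (deriv u s) ^ 2 * s ^ m) + l⁻¹ * B) / 2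
      ≤ (l * M + l⁻¹ * B) / 2 := by
    have := mul_le_mul_of_nonneg_left step4 hlpos.le
    linarith
  calc |u b - u a| ≤ ∫ s in a..b, |deriv u s| := step1
    _ ≤ _ := step2
    _ = (l * (∫ s in a..b, (deriv u s) ^ 2 * s ^ m) + l⁻¹ * B) / 2 := step3
    _ ≤ (l * M + l⁻¹ * B) / 2 := this
    _ = Real.sqrt M * Real.sqrt B := hfinal

lemma pt_bound {γ M : ℝ} (hγ : 0 < γ) (hM : 0 < M) (m : ℕ)
    {u : ℝ → ℝ} (hu : ContDiff ℝ (⊤ : ℕ∞) u) (hzero : u γ = 0)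
    (hint : (∫ t in Set.Ioo 0 γ, (deriv u t) ^ 2 * t ^ m) ≤ M)
    {t : ℝ} (ht : t ∈ Set.Ioo 0 γ) : (u t) ^ 2 * t ^ m ≤ M * γ := by
  obtain ⟨ht0, htγ⟩ := ht
  have h1 : |u t| ≤ Real.sqrt M * Real.sqrt (∫ s in t..γ, (s ^ m)⁻¹) := by
    have := key_est hγ hM m hu hint ht0 htγ.le le_rfl
    rwa [hzero, zero_sub, abs_neg] at this
  set B := ∫ s in t..γ, ((s:ℝ) ^ m)⁻¹ with hB
  have hBnn : 0 ≤ B := intB_nonneg ht0 htγ.le m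
  have hBle : B ≤ γ * (t ^ m)⁻¹ := by
    have := intB_le ht0 htγ.le m
    have h2 : (γ - t) * (t ^ m)⁻¹ ≤ γ * (t ^ m)⁻¹ := by
      apply mul_le_mul_of_nonneg_right (by linarith) (by positivity)
    linarith
  have h2 : (u t) ^ 2 ≤ M * B := by
    have := mul_le_mul h1 h1 (abs_nonneg _) (by positivity)
    rw [← sq_abs]
    calc |u t| ^ 2 = |u t| * |u t| := pow_two _
      _ ≤ (Real.sqrt M * Real.sqrt B) * (Real.sqrt M * Real.sqrt B) := this
      _ = M * B := by
          rw [mul_mul_mul_comm, Real.mul_self_sqrt hM.le, Real.mul_self_sqrt hBnn]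
  have htm : (0:ℝ) < t ^ m := pow_pos ht0 m
  calc (u t) ^ 2 * t ^ m ≤ (M * B) * t ^ m := by
        exact mul_le_mul_of_nonneg_right h2 htm.le
    _ ≤ (M * (γ * (t ^ m)⁻¹)) * t ^ m := by
        apply mul_le_mul_of_nonneg_right _ htm.le
        exact mul_le_mul_of_nonneg_left hBle hM.le
    _ = M * γ := by field_simp

set_option maxHeartbeats 1000000 in
theorem stmt15 (N : ℕ) (hN : 3 ≤ N) (γ : ℝ) (hγ : 0 < γ)
    (u : ℕ → ℝ → ℝ) (hu : ∀ n, memA γ (u n))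
    (M : ℝ) (hM : ∀ n, (∫ t in Set.Ioo 0 γ, (deriv (u n) t) ^ 2 * t ^ (N - 2)) ≤ M) :
    ∃ φ : ℕ → ℕ, StrictMono φ ∧
      ∀ ε : ℝ, 0 < ε → ∃ K : ℕ, ∀ k ≥ K, ∀ l ≥ K,
        (∫ t in Set.Ioo 0 γ, (u (φ k) t - u (φ l) t) ^ 2 * t ^ (N - 2)) < ε := by
  classical
  set m := N - 2 with hm
  set M' := M + 1 with hM'def
  have hM0 : 0 ≤ M := by
    refine le_trans ?_ (hM 0)
    apply setIntegral_nonneg measurableSet_Ioo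
    intro t ht
    have : (0:ℝ) < t := ht.1
    positivity
  have hM'pos : 0 < M' := by rw [hM'def]; linarith
  have hint' : ∀ n, (∫ t in Set.Ioo 0 γ, (deriv (u n) t) ^ 2 * t ^ m) ≤ M' :=
    fun n => (hM n).trans (by rw [hM'def]; linarith)
  have hsmooth : ∀ n, ContDiff ℝ (⊤ : ℕ∞) (u n) := fun n => (hu n).1
  have hzero : ∀ n, u n γ = 0 := by
    intro n
    obtain ⟨-, η, hη, h⟩ := hu n
    exact h γ (by linarith)
  have hpt : ∀ n, ∀ t ∈ Set.Ioo 0 γ, (u n t) ^ 2 * t ^ m ≤ M' * γ :=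
    fun n t ht => pt_bound hγ hM'pos m (hsmooth n) (hzero n) (hint' n) ht
  have habs : ∀ n, ∀ t ∈ Set.Ioo 0 γ, |u n t| ≤ Real.sqrt (M' * γ * (t ^ m)⁻¹) := by
    intro n t ht
    apply Real.abs_le_sqrt
    have h1 := hpt n t ht
    have htm : (0:ℝ) < t ^ m := pow_pos ht.1 m
    rw [show M' * γ * (t ^ m)⁻¹ = (M' * γ) / (t ^ m) by ring]
    exact (le_div_iff₀ htm).2 h1
  -- diagonal extraction over rationals in (0, γ)
  let Q := {q : ℚ // (q : ℝ) ∈ Set.Ioo 0 γ}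
  let C : Q → ℝ := fun q => Real.sqrt (M' * γ * (((q : ℚ) : ℝ) ^ m)⁻¹)
  have hcomp : IsCompact (Set.univ.pi fun q : Q => Set.Icc (-(C q)) (C q)) :=
    isCompact_univ_pi fun q => isCompact_Icc
  let F : ℕ → (Q → ℝ) := fun n q => u n ((q : ℚ) : ℝ)
  have hmem : ∀ n, F n ∈ Set.univ.pi fun q : Q => Set.Icc (-(C q)) (C q) := by
    intro n
    rw [Set.mem_univ_pi]
    intro q
    rw [Set.mem_Icc]
    exact abs_le.1 (habs n _ q.2)
  obtain ⟨a, -, φ, hφ, hconv⟩ := hcomp.tendsto_subseq hmem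
  have hq : ∀ q : Q, Filter.Tendsto (fun k => u (φ k) ((q : ℚ) : ℝ)) Filter.atTop (nhds (a q)) :=
    fun q => tendsto_pi_nhds.1 hconv q
  refine ⟨φ, hφ, ?_⟩
  -- pointwise Cauchy on all of (0, γ)
  have hcau : ∀ t ∈ Set.Ioo 0 γ, CauchySeq fun k => u (φ k) t := by
    intro t ht
    obtain ⟨ht0, htγ⟩ := ht
    rw [Metric.cauchySeq_iff]
    intro ε hε
    set c := ((t / 2) ^ m)⁻¹ with hc
    have hcpos : 0 < c := by positivity
    set δ := min (t / 2) (ε ^ 2 / (10 * M' * c)) with hδ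
    have hδpos : 0 < δ := lt_min (by linarith) (by positivity)
    have hδt2 : δ ≤ t / 2 := min_le_left _ _
    obtain ⟨q, hq1, hq2⟩ := exists_rat_btwn (show t - δ < t by linarith)
    have hqhalf : t / 2 ≤ ((q : ℚ) : ℝ) := by
      have : t - δ ≥ t / 2 := by linarith
      linarith
    have hq0 : (0:ℝ) < ((q : ℚ) : ℝ) := by linarith
    have hqmem : ((q : ℚ) : ℝ) ∈ Set.Ioo 0 γ := ⟨hq0, hq2.trans htγ⟩
    have hest : ∀ n, |u n t - u n ((q : ℚ) : ℝ)| < ε / 3 := by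
      intro n
      have h1 := key_est hγ hM'pos m (hsmooth n) (hint' n) hq0 hq2.le htγ.le
      have hBnn := intB_nonneg hq0 hq2.le m
      have hBle : (∫ s in ((q : ℚ) : ℝ)..t, (s ^ m)⁻¹) ≤ δ * c := by
        have h2 := intB_le hq0 hq2.le m
        have e1 : t - ((q : ℚ) : ℝ) ≤ δ := by linarith
        have e2 : ((((q : ℚ) : ℝ)) ^ m)⁻¹ ≤ c := by
          rw [hc]
          exact inv_anti₀ (by positivity) (pow_le_pow_left₀ (by linarith) hqhalf m)
        calc (∫ s in ((q : ℚ) : ℝ)..t, (s ^ m)⁻¹)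
            ≤ (t - ((q : ℚ) : ℝ)) * ((((q : ℚ) : ℝ)) ^ m)⁻¹ := h2
          _ ≤ δ * c := mul_le_mul e1 e2 (by positivity) hδpos.le
      have h3 : M' * (δ * c) ≤ ε ^ 2 / 10 := by
        have hδ2 : δ ≤ ε ^ 2 / (10 * M' * c) := min_le_right _ _
        have := mul_le_mul_of_nonneg_left hδ2 (mul_pos hM'pos hcpos).le
        calc M' * (δ * c) = (M' * c) * δ := by ring
          _ ≤ (M' * c) * (ε ^ 2 / (10 * M' * c)) := by
              exact mul_le_mul_of_nonneg_left hδ2 (mul_pos hM'pos hcpos).le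
          _ = ε ^ 2 / 10 := by field_simp
      calc |u n t - u n ((q : ℚ) : ℝ)|
          ≤ Real.sqrt M' * Real.sqrt (∫ s in ((q : ℚ) : ℝ)..t, (s ^ m)⁻¹) := h1
        _ ≤ Real.sqrt M' * Real.sqrt (δ * c) :=
            mul_le_mul_of_nonneg_left (Real.sqrt_le_sqrt hBle) (Real.sqrt_nonneg _)
        _ = Real.sqrt (M' * (δ * c)) := (Real.sqrt_mul hM'pos.le _).symm
        _ ≤ Real.sqrt (ε ^ 2 / 10) := Real.sqrt_le_sqrt h3
        _ < Real.sqrt ((ε / 3) ^ 2) := by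
            apply Real.sqrt_lt_sqrt (by positivity)
            nlinarith
        _ = ε / 3 := Real.sqrt_sq (by linarith)
    have hcq : CauchySeq fun k => u (φ k) ((q : ℚ) : ℝ) := (hq ⟨q, hqmem⟩).cauchySeq
    rw [Metric.cauchySeq_iff] at hcq
    obtain ⟨K, hK⟩ := hcq (ε / 3) (by linarith)
    refine ⟨K, fun k hk l hl => ?_⟩
    have h4 := hK k hk l hl
    rw [Real.dist_eq] at h4 ⊢
    have e1 := hest (φ k)
    have e2 := hest (φ l)
    have tri : |u (φ k) t - u (φ l) t| ≤
        |u (φ k) t - u (φ k) ((q : ℚ) : ℝ)| + |u (φ k) ((q : ℚ) : ℝ) - u (φ l) ((q : ℚ) : ℝ)|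
          + |u (φ l) ((q : ℚ) : ℝ) - u (φ l) t| := by
      have := abs_sub_le (u (φ k) t) (u (φ k) ((q : ℚ) : ℝ)) (u (φ l) t)
      have := abs_sub_le (u (φ k) ((q : ℚ) : ℝ)) (u (φ l) ((q : ℚ) : ℝ)) (u (φ l) t)
      linarith
    rw [abs_sub_comm (u (φ l) ((q : ℚ) : ℝ))] at tri
    linarith
  -- pointwise limit g
  have hEx : ∀ t : ℝ, ∃ L : ℝ,
      t ∈ Set.Ioo 0 γ → Filter.Tendsto (fun k => u (φ k) t) Filter.atTop (nhds L) := by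
    intro t
    by_cases ht : t ∈ Set.Ioo 0 γ
    · obtain ⟨L, hL⟩ := cauchySeq_tendsto_of_complete (hcau t ht)
      exact ⟨L, fun _ => hL⟩
    · exact ⟨0, fun h => absurd h ht⟩
  choose g hg using hEx
  have hgbd : ∀ t ∈ Set.Ioo 0 γ, (g t) ^ 2 * t ^ m ≤ M' * γ := by
    intro t ht
    have h1 : Filter.Tendsto (fun k => (u (φ k) t) ^ 2 * t ^ m) Filter.atTop
        (nhds ((g t) ^ 2 * t ^ m)) := ((hg t ht).pow 2).mul_const _
    exact le_of_tendsto h1 (Filter.Eventually.of_forall fun k => hpt _ t ht)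
  set μ := volume.restrict (Set.Ioo 0 γ) with hμ
  have hfin : IsFiniteMeasure μ := by
    constructor
    rw [hμ, Measure.restrict_apply_univ]
    exact measure_Ioo_lt_top
  have hgm : AEMeasurable g μ := by
    apply aemeasurable_of_tendsto_metrizable_ae Filter.atTop
      (fun k => (hsmooth (φ k)).continuous.measurable.aemeasurable)
    exact (ae_restrict_iff' measurableSet_Ioo).2 (Filter.Eventually.of_forall fun t ht => hg t ht)
  set G : ℕ → ℝ → ℝ := fun k t => (u (φ k) t - g t) ^ 2 * t ^ m with hG
  have hGm : ∀ k, AEStronglyMeasurable (G k) μ := fun k =>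
    ((((hsmooth (φ k)).continuous.measurable.aemeasurable.sub hgm).pow_const 2).mul
      (measurable_id.pow_const m).aemeasurable).aestronglyMeasurable
  have hGbd : ∀ k, ∀ᵐ t ∂μ, ‖G k t‖ ≤ 4 * (M' * γ) := by
    intro k
    refine (ae_restrict_iff' measurableSet_Ioo).2 (Filter.Eventually.of_forall fun t ht => ?_)
    have h1 := hpt (φ k) t ht
    have h2 := hgbd t ht
    have htm : (0:ℝ) < t ^ m := pow_pos ht.1 m
    rw [hG, Real.norm_eq_abs, abs_of_nonneg (mul_nonneg (sq_nonneg _) htm.le)]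
    nlinarith [mul_nonneg (sq_nonneg (u (φ k) t + g t)) htm.le]
  have hbint : Integrable (fun _ : ℝ => 4 * (M' * γ)) μ := integrable_const _
  have hGlim : ∀ᵐ t ∂μ, Filter.Tendsto (fun k => G k t) Filter.atTop (nhds 0) := by
    refine (ae_restrict_iff' measurableSet_Ioo).2 (Filter.Eventually.of_forall fun t ht => ?_)
    have h1 : Filter.Tendsto (fun k => (u (φ k) t - g t) ^ 2 * t ^ m) Filter.atTop
        (nhds (((g t - g t) ^ 2) * t ^ m)) :=
      (((hg t ht).sub tendsto_const_nhds).pow 2).mul_const _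
    simpa using h1
  have htend : Filter.Tendsto (fun k => ∫ t, G k t ∂μ) Filter.atTop (nhds (∫ _, (0:ℝ) ∂μ)) :=
    tendsto_integral_of_dominated_convergence _ hGm hbint hGbd hGlim
  rw [integral_zero] at htend
  have hGint : ∀ j, Integrable (G j) μ := fun j => Integrable.mono' hbint (hGm j) (hGbd j)
  intro ε hε
  obtain ⟨K, hK⟩ := (Metric.tendsto_atTop.1 htend) (ε / 5) (by linarith)
  refine ⟨K, fun k hk l hl => ?_⟩
  have hk' := hK k hk
  have hl' := hK l hl
  rw [Real.dist_eq, sub_zero] at hk' hl'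
  have hGk := (abs_lt.1 hk').2
  have hGl := (abs_lt.1 hl').2
  -- pointwise comparison
  have hmono : (∫ t in Set.Ioo 0 γ, (u (φ k) t - u (φ l) t) ^ 2 * t ^ m)
      ≤ ∫ t in Set.Ioo 0 γ, (2 * G k t + 2 * G l t) := by
    apply setIntegral_mono_on
    · have hcont : Continuous fun t : ℝ => (u (φ k) t - u (φ l) t) ^ 2 * t ^ m := by
        have := ((hsmooth (φ k)).continuous.sub (hsmooth (φ l)).continuous)
        continuity
      exact (hcont.integrableOn_Icc (a := 0) (b := γ)).mono_set Set.Ioo_subset_Icc_self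
    · exact ((hGint k).const_mul 2).add ((hGint l).const_mul 2)
    · exact measurableSet_Ioo
    · intro t ht
      have htm : (0:ℝ) < t ^ m := pow_pos ht.1 m
      show (u (φ k) t - u (φ l) t) ^ 2 * t ^ m
        ≤ 2 * ((u (φ k) t - g t) ^ 2 * t ^ m) + 2 * ((u (φ l) t - g t) ^ 2 * t ^ m)
      nlinarith [mul_nonneg (sq_nonneg (u (φ k) t + u (φ l) t - 2 * g t)) htm.le]
  have hsplit : (∫ t in Set.Ioo 0 γ, (2 * G k t + 2 * G l t))
      = 2 * (∫ t, G k t ∂μ) + 2 * (∫ t, G l t ∂μ) := by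
    rw [← hμ]
    rw [integral_add ((hGint k).const_mul 2) ((hGint l).const_mul 2)]
    have e1 : ∀ j : ℕ, (∫ t, 2 * G j t ∂μ) = 2 * ∫ t, G j t ∂μ := by
      intro j
      rw [show (fun t => 2 * G j t) = fun t => (2:ℝ) • G j t from rfl, integral_smul,
        smul_eq_mul]
    rw [e1 k, e1 l]
  have hfin2 : (∫ t in Set.Ioo 0 γ, (u (φ k) t - u (φ l) t) ^ 2 * t ^ m) < ε := by
    rw [hsplit] at hmono
    linarith
  exact hfin2
end

section
/- Let a be a real number with 0 < a < 1. Then the function t ↦ tan(at)/tan(t) is strictly decreasing on the open interval (0, π/2). -/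
/-! After clearing denominators, the derivative of `t ↦ tan (a t) / tan t` has the sign of
`a sin t cos t - sin (a t) cos (a t) = (a sin 2t - sin (2 a t)) / 2`, which is negative because
strict concavity of `sin` on `[0, π]` gives `a sin x < sin (a x)` for `0 < a < 1` and
`0 < x ≤ π`. -/

open Real

namespace Real

theorem mul_sin_lt_sin_mul {a x : ℝ} (ha0 : 0 < a) (ha1 : a < 1) (hx0 : 0 < x) (hxπ : x ≤ π) :
    a * sin x < sin (a * x) := by
  simpa using strictConcaveOn_sin_Icc.2 (x := 0) (y := x) ⟨le_rfl, pi_pos.le⟩ ⟨hx0.le, hxπ⟩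
    hx0.ne (sub_pos.2 ha1) ha0 (by ring)

theorem mul_sin_mul_cos_lt {a t : ℝ} (ha0 : 0 < a) (ha1 : a < 1) (ht0 : 0 < t)
    (htπ : t ≤ π / 2) : a * (sin t * cos t) < sin (a * t) * cos (a * t) := by
  have h := mul_sin_lt_sin_mul ha0 ha1 (by positivity : 0 < 2 * t) (by linarith)
  rw [mul_left_comm, sin_two_mul, sin_two_mul] at h
  linarith

theorem hasDerivAt_tan_mul_div_tan {a t : ℝ} (hcat : cos (a * t) ≠ 0) (hct : cos t ≠ 0)
    (hst : sin t ≠ 0) :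
    HasDerivAt (fun t => tan (a * t) / tan t)
      ((a * (sin t * cos t) - sin (a * t) * cos (a * t)) / (cos (a * t) * sin t) ^ 2) t := by
  have hnum : HasDerivAt (fun t => tan (a * t)) (1 / cos (a * t) ^ 2 * a) t :=
    (hasDerivAt_tan hcat).comp t ((hasDerivAt_id t).const_mul a |>.congr_deriv (mul_one a))
  have htan : tan t ≠ 0 := by rw [tan_eq_sin_div_cos]; exact div_ne_zero hst hct
  refine (hnum.div (hasDerivAt_tan hct) htan).congr_deriv ?_
  rw [tan_eq_sin_div_cos, tan_eq_sin_div_cos]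
  field_simp

end Real

theorem stmt16 (a : ℝ) (ha0 : 0 < a) (ha1 : a < 1) :
    StrictAntiOn (fun t : ℝ => Real.tan (a * t) / Real.tan t)
      (Set.Ioo 0 (π / 2)) := by
  have hpos : ∀ t ∈ Set.Ioo 0 (π / 2), 0 < cos (a * t) ∧ 0 < cos t ∧ 0 < sin t := by
    rintro t ⟨ht0, htπ⟩
    have hat : a * t < π / 2 := by nlinarith
    exact ⟨cos_pos_of_mem_Ioo ⟨by nlinarith [pi_pos], hat⟩,
      cos_pos_of_mem_Ioo ⟨by linarith [pi_pos], htπ⟩,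
      sin_pos_of_pos_of_lt_pi ht0 (by linarith)⟩
  have hderiv : ∀ t ∈ Set.Ioo 0 (π / 2), HasDerivAt (fun t => tan (a * t) / tan t)
      ((a * (sin t * cos t) - sin (a * t) * cos (a * t)) / (cos (a * t) * sin t) ^ 2) t :=
    fun t ht =>
      let ⟨hcat, hct, hst⟩ := hpos t ht
      hasDerivAt_tan_mul_div_tan hcat.ne' hct.ne' hst.ne'
  refine strictAntiOn_of_deriv_neg (convex_Ioo _ _)
    (fun t ht => (hderiv t ht).continuousAt.continuousWithinAt) fun t ht => ?_
  rw [interior_Ioo] at ht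
  obtain ⟨hcat, -, hst⟩ := hpos t ht
  rw [(hderiv t ht).deriv]
  exact div_neg_of_neg_of_pos (sub_neg.2 (mul_sin_mul_cos_lt ha0 ha1 ht.1 ht.2.le))
    (by positivity)
end

section
/- For every ε ∈ (0, 1) there exists δ > 0 such that, setting γ = π/2 + δ, for all θ ∈ [0, π/2 − ε]: sin(πθ/(2γ)) · cos θ ≥ (1 − ε) · cos(πθ/(2γ)) · sin θ. -/
open Real

theorem stmt17 :
    ∀ ε : ℝ, ε ∈ Set.Ioo (0 : ℝ) 1 → ∃ δ : ℝ, 0 < δ ∧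
      ∀ θ : ℝ, θ ∈ Set.Icc 0 (π / 2 - ε) →
        Real.sin (π * θ / (2 * (π / 2 + δ))) * Real.cos θ ≥
          (1 - ε) * Real.cos (π * θ / (2 * (π / 2 + δ))) * Real.sin θ := by
  intro ε hε
  obtain ⟨hε0, hε1⟩ := hε
  have hπ := Real.pi_pos
  have hπ2 : (2:ℝ) < π := by
    have := Real.pi_gt_three; linarith
  refine ⟨ε^2/π, by positivity, ?_⟩
  intro θ ⟨hθ0, hθ1⟩
  set δ := ε^2/π with hδ
  have hδ0 : 0 < δ := by positivity
  have hθπ : θ ≤ π/2 := by linarith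
  set a := π * θ / (2 * (π/2 + δ)) with ha
  have hγ : 0 < 2 * (π/2 + δ) := by positivity
  have ha0 : 0 ≤ a := by positivity
  have haθ : a ≤ θ := by
    rw [ha, div_le_iff₀ hγ]; nlinarith
  -- θ - a ≤ 2δ/π * θ
  have hkey : θ - a ≤ 2*δ/π * θ := by
    have h : θ - a = 2*δ*θ/(2*(π/2+δ)) := by rw [ha]; field_simp; ring
    have h2 : 2*δ/π * θ = 2*δ*θ/π := by ring
    rw [h, h2, div_le_div_iff₀ hγ hπ]
    nlinarith [mul_nonneg (mul_nonneg hδ0.le hθ0) hδ0.le]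
  have hsin1 : Real.sin (θ - a) ≤ θ - a := Real.sin_le (by linarith)
  have hcos1 : Real.cos θ ≤ Real.cos a :=
    Real.cos_le_cos_of_nonneg_of_le_pi ha0 (by linarith) haθ
  have hcos2 : Real.sin ε ≤ Real.cos θ := by
    rw [← Real.cos_pi_div_two_sub]
    exact Real.cos_le_cos_of_nonneg_of_le_pi (by linarith) (by linarith) (by linarith)
  have hsε : 2/π * ε ≤ Real.sin ε := Real.mul_le_sin hε0.le (by linarith)
  have hsθ : 2/π * θ ≤ Real.sin θ := Real.mul_le_sin hθ0 hθπ
  have hsθ0 : 0 ≤ Real.sin θ := Real.sin_nonneg_of_nonneg_of_le_pi hθ0 (by linarith)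
  have hsub : Real.sin a * Real.cos θ - Real.cos a * Real.sin θ = Real.sin (a - θ) :=
    (Real.sin_sub a θ).symm
  have hneg : Real.sin (a - θ) = - Real.sin (θ - a) := by
    rw [← Real.sin_neg]; ring_nf
  -- need: sin(θ-a) ≤ ε * cos a * sin θ
  have hmain : Real.sin (θ - a) ≤ ε * Real.cos a * Real.sin θ := by
    have h1 : ε * Real.cos a * Real.sin θ ≥ ε * (2/π * ε) * (2/π * θ) := by
      have hca : 2/π * ε ≤ Real.cos a := le_trans hsε (le_trans hcos2 hcos1)
      have h2e : 0 ≤ 2/π * ε := by positivity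
      have h2t : 0 ≤ 2/π * θ := by positivity
      nlinarith [mul_le_mul hca hsθ h2t (le_trans h2e hca)]
    have h2 : 2*δ/π * θ ≤ ε * (2/π * ε) * (2/π * θ) := by
      rw [hδ]
      have hd : ε * (2/π * ε) * (2/π * θ) - 2*(ε^2/π)/π * θ = 2*ε^2*θ/π^2 := by
        field_simp; ring
      nlinarith [div_nonneg (by positivity : (0:ℝ) ≤ 2*ε^2*θ)
        (by positivity : (0:ℝ) ≤ π^2)]
    linarith
  nlinarith [hmain, hsub, hneg]
end
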